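/- arXiv:1612.08597 — 3 statements merged into one kernel-verified Lean document; each statement's English description precedes it below -/
import Mathlib

section
/- For 0 < |q| < 1 and |z| < 1, the q-binomial theorem holds: ∑_{n=0}^∞ ((a;q)_n / (q;q)_n) z^n = (az;q)_∞ / (z;q)_∞, where (a;q)_n = ∏_{j=0}^{n-1}(1 - a q^j) and (a;q)_∞ = ∏_{n=0}^∞ (1 - a q^n). -/
/-!
The coefficients `c n = (a;q)_n / (q;q)_n` converge to `(a;q)_∞ / (q;q)_∞`, so they are bounded
and `F w = ∑ c n * w ^ n` converges for `‖w‖ < 1`. The recursion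
`c (n + 1) * (1 - q ^ (n + 1)) = c n * (1 - a * q ^ n)` turns into the functional equation
`(1 - w) * F w = (1 - a * w) * F (w * q)`, which iterates to
`(z;q)_N * F z = (a z;q)_N * F (z * q ^ N)`. As `N → ∞` the partial products converge to the
infinite ones and `F (z * q ^ N) → F 0 = 1` by dominated convergence, and `(z;q)_∞ ≠ 0` since
no factor vanishes and `∑ ‖z * q ^ n‖ < ∞`.
-/

/-- finite q-Pochhammer symbol `(a;q)_n`. -/
noncomputable def qPoch (q a : ℂ) (n : ℕ) : ℂ := ∏ j ∈ Finset.range n, (1 - a * q ^ j)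

/-- infinite q-Pochhammer symbol `(a;q)_∞`. -/
noncomputable def qPochInf (q a : ℂ) : ℂ := ∏' n : ℕ, (1 - a * q ^ n)

open Filter Topology

lemma qPoch_succ (q a : ℂ) (n : ℕ) : qPoch q a (n + 1) = qPoch q a n * (1 - a * q ^ n) :=
  Finset.prod_range_succ _ _

section

variable {q : ℂ}

lemma norm_mul_pow_le (hq : ‖q‖ ≤ 1) (x : ℂ) (n : ℕ) : ‖x * q ^ n‖ ≤ ‖x‖ := by
  rw [norm_mul, norm_pow]
  exact mul_le_of_le_one_right (norm_nonneg x) (pow_le_one₀ (norm_nonneg q) hq)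

lemma norm_mul_pow_lt_one (hq : ‖q‖ ≤ 1) {x : ℂ} (hx : ‖x‖ < 1) (n : ℕ) : ‖x * q ^ n‖ < 1 :=
  (norm_mul_pow_le hq x n).trans_lt hx

lemma one_sub_mul_pow_ne_zero (hq : ‖q‖ ≤ 1) {x : ℂ} (hx : ‖x‖ < 1) (n : ℕ) :
    1 - x * q ^ n ≠ 0 := fun h => by
  have := norm_mul_pow_lt_one hq hx n
  simp [← eq_of_sub_eq_zero h] at this

lemma summable_norm_mul_pow (hq : ‖q‖ < 1) (x : ℂ) : Summable fun n : ℕ => ‖x * q ^ n‖ := by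
  simpa only [norm_mul, norm_pow] using
    (summable_geometric_of_lt_one (norm_nonneg q) hq).mul_left ‖x‖

lemma tendsto_qPoch (hq : ‖q‖ < 1) (x : ℂ) :
    Tendsto (qPoch q x) atTop (𝓝 (qPochInf q x)) := by
  have hmul : Multipliable fun n : ℕ => 1 + -(x * q ^ n) :=
    multipliable_one_add_of_summable (by simpa only [norm_neg] using summable_norm_mul_pow hq x)
  simp only [← sub_eq_add_neg] at hmul
  exact hmul.hasProd.tendsto_prod_nat

lemma qPochInf_ne_zero (hq : ‖q‖ < 1) {x : ℂ} (hx : ‖x‖ < 1) : qPochInf q x ≠ 0 := by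
  simpa only [qPochInf, ← sub_eq_add_neg] using
    tprod_one_add_ne_zero_of_summable (f := fun n => -(x * q ^ n))
      (by simpa only [← sub_eq_add_neg] using one_sub_mul_pow_ne_zero hq.le hx)
      (by simpa only [norm_neg] using summable_norm_mul_pow hq x)

lemma qPoch_ne_zero (hq : ‖q‖ ≤ 1) {x : ℂ} (hx : ‖x‖ < 1) (n : ℕ) : qPoch q x n ≠ 0 :=
  Finset.prod_ne_zero_iff.2 fun j _ => one_sub_mul_pow_ne_zero hq hx j

noncomputable def qBinomCoeff (q a : ℂ) (n : ℕ) : ℂ := qPoch q a n / qPoch q q n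

lemma qBinomCoeff_succ_mul (hq : ‖q‖ < 1) (a : ℂ) (n : ℕ) :
    qBinomCoeff q a (n + 1) * (1 - q ^ (n + 1)) = qBinomCoeff q a n * (1 - a * q ^ n) := by
  have hden := qPoch_ne_zero hq.le hq n
  have hfac : 1 - q ^ (n + 1) ≠ 0 := pow_succ' q n ▸ one_sub_mul_pow_ne_zero hq.le hq n
  rw [qBinomCoeff, qBinomCoeff, qPoch_succ, qPoch_succ, ← pow_succ']
  field_simp

lemma exists_norm_qBinomCoeff_le (hq : ‖q‖ < 1) (a : ℂ) : ∃ M, ∀ n, ‖qBinomCoeff q a n‖ ≤ M := by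
  have hlim : Tendsto (qBinomCoeff q a) atTop (𝓝 (qPochInf q a / qPochInf q q)) :=
    (tendsto_qPoch hq a).div (tendsto_qPoch hq q) (qPochInf_ne_zero hq hq)
  obtain ⟨M, hM⟩ := hlim.norm.bddAbove_range
  exact ⟨M, fun n => hM (Set.mem_range_self n)⟩

lemma summable_norm_qBinomCoeff_mul_pow (hq : ‖q‖ < 1) (a : ℂ) {w : ℂ} (hw : ‖w‖ < 1) :
    Summable fun n => ‖qBinomCoeff q a n * w ^ n‖ := by
  obtain ⟨M, hM⟩ := exists_norm_qBinomCoeff_le hq a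
  refine .of_nonneg_of_le (fun n => norm_nonneg _) (fun n => ?_)
    ((summable_geometric_of_lt_one (norm_nonneg w) hw).mul_left M)
  rw [norm_mul, norm_pow]
  exact mul_le_mul_of_nonneg_right (hM n) (by positivity)

lemma summable_qBinomCoeff_mul_pow (hq : ‖q‖ < 1) (a : ℂ) {w : ℂ} (hw : ‖w‖ < 1) :
    Summable fun n => qBinomCoeff q a n * w ^ n :=
  (summable_norm_qBinomCoeff_mul_pow hq a hw).of_norm

noncomputable def qBinomSeries (q a w : ℂ) : ℂ := ∑' n, qBinomCoeff q a n * w ^ n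

lemma one_sub_mul_qBinomSeries (hq : ‖q‖ < 1) (a : ℂ) {w : ℂ} (hw : ‖w‖ < 1) :
    (1 - w) * qBinomSeries q a w = (1 - a * w) * qBinomSeries q a (w * q) := by
  have hwq : ‖w * q‖ < 1 := by simpa only [pow_one] using norm_mul_pow_lt_one hq.le hw 1
  have hS : HasSum (fun n => qBinomCoeff q a n * w ^ n) (qBinomSeries q a w) :=
    (summable_qBinomCoeff_mul_pow hq a hw).hasSum
  have hSq : HasSum (fun n => qBinomCoeff q a n * (w * q) ^ n) (qBinomSeries q a (w * q)) :=
    (summable_qBinomCoeff_mul_pow hq a hwq).hasSum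
  have hdiff := (hasSum_nat_add_iff' 1).2 (hS.sub hSq)
  simp only [Finset.sum_range_one, pow_zero, mul_one, sub_self, sub_zero] at hdiff
  have hrec : HasSum
      (fun n => w * (qBinomCoeff q a n * w ^ n) - a * w * (qBinomCoeff q a n * (w * q) ^ n))
      (qBinomSeries q a w - qBinomSeries q a (w * q)) :=
    hdiff.congr_fun fun n => by linear_combination -w ^ (n + 1) * qBinomCoeff_succ_mul hq a n
  linear_combination hrec.unique ((hS.mul_left w).sub (hSq.mul_left (a * w)))

lemma qPoch_mul_qBinomSeries (hq : ‖q‖ < 1) (a : ℂ) {z : ℂ} (hz : ‖z‖ < 1) (N : ℕ) :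
    qPoch q z N * qBinomSeries q a z = qPoch q (a * z) N * qBinomSeries q a (z * q ^ N) := by
  induction N with
  | zero => simp [qPoch]
  | succ N ih =>
    have h := one_sub_mul_qBinomSeries hq a (norm_mul_pow_lt_one hq.le hz N)
    rw [mul_assoc, ← pow_succ] at h
    rw [qPoch_succ, qPoch_succ]
    linear_combination (1 - z * q ^ N) * ih + qPoch q (a * z) N * h

lemma tendsto_qBinomSeries_mul_pow (hq : ‖q‖ < 1) (a : ℂ) {z : ℂ} (hz : ‖z‖ < 1) :
    Tendsto (fun N => qBinomSeries q a (z * q ^ N)) atTop (𝓝 1) := by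
  have h0 : Tendsto (fun N => z * q ^ N) atTop (𝓝 0) := by
    simpa using (tendsto_pow_atTop_nhds_zero_of_norm_lt_one hq).const_mul z
  have hlim := tendsto_tsum_of_dominated_convergence (summable_norm_qBinomCoeff_mul_pow hq a hz)
    (fun n => (h0.pow n).const_mul (qBinomCoeff q a n)) (Eventually.of_forall fun N n => ?_)
  · rw [tsum_eq_single 0 (fun n hn => by simp [hn]), pow_zero, mul_one] at hlim
    simpa [qBinomSeries, qBinomCoeff, qPoch] using hlim
  · rw [norm_mul, norm_mul, norm_pow, norm_pow]
    gcongr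
    exact norm_mul_pow_le hq.le z N

end

theorem q_binomial_theorem_general (q a z : ℂ) (hq1 : ‖q‖ < 1) (hz : ‖z‖ < 1) :
    ∑' n : ℕ, qPoch q a n / qPoch q q n * z ^ n
      = qPochInf q (a * z) / qPochInf q z := by
  have hlim : qPochInf q z * qBinomSeries q a z = qPochInf q (a * z) * 1 :=
    tendsto_nhds_unique ((tendsto_qPoch hq1 z).mul_const _)
      (((tendsto_qPoch hq1 (a * z)).mul (tendsto_qBinomSeries_mul_pow hq1 a hz)).congr
        fun N => (qPoch_mul_qBinomSeries hq1 a hz N).symm)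
  change qBinomSeries q a z = _
  rw [eq_div_iff (qPochInf_ne_zero hq1 hz)]
  linear_combination hlim

/-- The q-binomial theorem. -/
theorem q_binomial_theorem (q a z : ℂ) (hq0 : 0 < ‖q‖) (hq1 : ‖q‖ < 1) (hz : ‖z‖ < 1) :
    ∑' n : ℕ, qPoch q a n / qPoch q q n * z ^ n
      = qPochInf q (a * z) / qPochInf q z :=
  q_binomial_theorem_general q a z hq1 hz
end

section
/- For 0 < |q| < 1 and |z| small enough that all series converge, e_q(αz) E_q(βz) = ∑_{n=0}^∞ ((-β α^{-1}; q)_n / (q;q)_n) (αz)^n, where e_q(z) = ∑_{n=0}^∞ z^n/(q;q)_n and E_q(z) = ∑_{n=0}^∞ q^{binom(n,2)} z^n/(q;q)_n. -/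
noncomputable def qPoch3 (q a : ℂ) (n : ℕ) : ℂ := ∏ j ∈ Finset.range n, (1 - a * q ^ j)

/-!
Both sides are power series in `z`, so it suffices to compare coefficients of the Cauchy product.
After dividing by `αⁿ`, the coefficient of `zⁿ` on the left is
`∑_{k+l=n} q^(l choose 2) xˡ / ((q;q)ₖ (q;q)ₗ)` with `x = β/α`, and Rothe's finite
`q`-binomial theorem identifies this sum with `(-x;q)ₙ / (q;q)ₙ`. Rothe's theorem follows by
induction on `n` from the splitting `1 - q^(n+1) = (1 - qᵏ) + qᵏ (1 - qˡ)` for `k + l = n + 1`.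
-/

open Finset Finset.HasAntidiagonal Filter Topology

lemma qPoch3_succ (q a : ℂ) (n : ℕ) :
    qPoch3 q a (n + 1) = qPoch3 q a n * (1 - a * q ^ n) :=
  prod_range_succ _ _

lemma qPoch3_self_succ (q : ℂ) (n : ℕ) :
    qPoch3 q q (n + 1) = qPoch3 q q n * (1 - q ^ (n + 1)) := by
  rw [qPoch3_succ, pow_succ']

lemma qPoch3_ne_zero_of_norm_lt_one {q a : ℂ} (ha : ‖a‖ < 1) (hq : ‖q‖ ≤ 1) (n : ℕ) :
    qPoch3 q a n ≠ 0 := by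
  refine prod_ne_zero_iff.mpr fun j _ => sub_ne_zero.mpr fun h => ?_
  have : ‖a * q ^ j‖ < 1 := by
    rw [norm_mul, norm_pow]
    exact mul_lt_one_of_nonneg_of_lt_one_left (norm_nonneg a) ha
      (pow_le_one₀ (norm_nonneg q) hq)
  simp [← h] at this

section Rothe

variable (q x : ℂ)

lemma one_sub_pow_succ_mul_rothe_term_succ_left {k : ℕ} (hk : 1 - q ^ (k + 1) ≠ 0) (l : ℕ) :
    (1 - q ^ (k + 1)) * (q ^ l.choose 2 * x ^ l / (qPoch3 q q (k + 1) * qPoch3 q q l))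
      = q ^ l.choose 2 * x ^ l / (qPoch3 q q k * qPoch3 q q l) := by
  rw [qPoch3_self_succ, mul_right_comm, mul_div_assoc', mul_comm (1 - _), mul_div_mul_right _ _ hk]

lemma one_sub_pow_succ_mul_rothe_term_succ_right (k : ℕ) {l : ℕ} (hl : 1 - q ^ (l + 1) ≠ 0) :
    (1 - q ^ (l + 1)) * (q ^ (l + 1).choose 2 * x ^ (l + 1) / (qPoch3 q q k * qPoch3 q q (l + 1)))
      = q ^ l * x * (q ^ l.choose 2 * x ^ l / (qPoch3 q q k * qPoch3 q q l)) := by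
  rw [qPoch3_self_succ, ← mul_assoc, mul_div_assoc', mul_comm (1 - _), mul_div_mul_right _ _ hl,
    Nat.choose_succ_succ', Nat.choose_one_right, pow_add, pow_succ]
  ring

theorem qPoch3_neg_div_qPoch3_self_eq_sum_antidiagonal {n : ℕ} (hq : qPoch3 q q n ≠ 0) :
    qPoch3 q (-x) n / qPoch3 q q n
      = ∑ p ∈ antidiagonal n,
          q ^ p.2.choose 2 * x ^ p.2 / (qPoch3 q q p.1 * qPoch3 q q p.2) := by
  induction n with
  | zero => simp [qPoch3]
  | succ n ih =>
    set g : ℕ × ℕ → ℂ := fun p =>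
      q ^ p.2.choose 2 * x ^ p.2 / (qPoch3 q q p.1 * qPoch3 q q p.2)
    obtain ⟨hqn, hu⟩ := mul_ne_zero_iff.mp (qPoch3_self_succ q n ▸ hq)
    have hfac : ∀ j ≤ n, 1 - q ^ (j + 1) ≠ 0 := by
      intro j hj
      rcases hj.lt_or_eq with hj | rfl
      · simpa [pow_succ'] using prod_ne_zero_iff.mp hqn j (mem_range.mpr hj)
      · exact hu
    have hsplit : (1 - q ^ (n + 1)) * ∑ p ∈ antidiagonal (n + 1), g p
        = ∑ p ∈ antidiagonal (n + 1), (1 - q ^ p.1) * g p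
          + ∑ p ∈ antidiagonal (n + 1), q ^ p.1 * ((1 - q ^ p.2) * g p) := by
      rw [mul_sum, ← sum_add_distrib]
      refine sum_congr rfl fun p hp => ?_
      rw [← mem_antidiagonal.mp hp, pow_add]
      ring
    have hleft :
        ∑ p ∈ antidiagonal (n + 1), (1 - q ^ p.1) * g p = ∑ p ∈ antidiagonal n, g p := by
      rw [Nat.sum_antidiagonal_succ, pow_zero, sub_self, zero_mul, zero_add]
      exact sum_congr rfl fun p hp =>
        one_sub_pow_succ_mul_rothe_term_succ_left q x (hfac p.1 (antidiagonal.fst_le hp)) p.2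
    have hright : ∑ p ∈ antidiagonal (n + 1), q ^ p.1 * ((1 - q ^ p.2) * g p)
        = q ^ n * x * ∑ p ∈ antidiagonal n, g p := by
      rw [Nat.sum_antidiagonal_succ', pow_zero, sub_self, zero_mul, mul_zero, zero_add, mul_sum]
      refine sum_congr rfl fun p hp => ?_
      rw [one_sub_pow_succ_mul_rothe_term_succ_right q x p.1 (hfac p.2 (antidiagonal.snd_le hp)),
        ← mem_antidiagonal.mp hp, pow_add]
      ring
    rw [← mul_right_inj' hu, hsplit, hleft, hright, ← ih hqn, qPoch3_succ, qPoch3_self_succ]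
    field_simp
    ring

end Rothe

lemma summable_norm_of_succ_eq_mul {R : Type*} [NonUnitalSeminormedRing R] {f c : ℕ → R}
    {r : ℝ} (hr : r < 1) (hc : Tendsto (fun n => ‖c n‖) atTop (𝓝 r))
    (hf : ∀ n, f (n + 1) = f n * c n) :
    Summable fun n => ‖f n‖ := by
  obtain ⟨r', hrr', hr'⟩ := exists_between hr
  refine summable_of_ratio_norm_eventually_le hr' ?_
  filter_upwards [hc.eventually (eventually_le_nhds hrr')] with n hn
  rw [norm_norm, norm_norm, hf, mul_comm r']
  exact (norm_mul_le _ _).trans (mul_le_mul_of_nonneg_left hn (norm_nonneg _))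

lemma tendsto_one_sub_pow_succ {R : Type*} [SeminormedRing R] {q : R} (hq : ‖q‖ < 1) :
    Tendsto (fun n : ℕ => 1 - q ^ (n + 1)) atTop (𝓝 1) := by
  simpa using tendsto_const_nhds.sub
    ((tendsto_pow_atTop_nhds_zero_of_norm_lt_one hq).comp (tendsto_add_atTop_nat 1))

lemma summable_norm_pow_div_qPoch3 {q w : ℂ} (hq : ‖q‖ < 1) (hw : ‖w‖ < 1) :
    Summable fun n => ‖w ^ n / qPoch3 q q n‖ := by
  refine summable_norm_of_succ_eq_mul (c := fun n => w / (1 - q ^ (n + 1))) hw ?_ fun n => ?_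
  · simpa using (tendsto_const_nhds.div (tendsto_one_sub_pow_succ hq) one_ne_zero).norm
  · rw [pow_succ, qPoch3_self_succ, mul_div_mul_comm]

lemma summable_norm_pow_choose_two_mul_pow_div_qPoch3 {q : ℂ} (hq : ‖q‖ < 1) (w : ℂ) :
    Summable fun n => ‖q ^ n.choose 2 * w ^ n / qPoch3 q q n‖ := by
  refine summable_norm_of_succ_eq_mul (c := fun n => q ^ n * w / (1 - q ^ (n + 1))) zero_lt_one
    ?_ fun n => ?_
  · simpa using (((tendsto_pow_atTop_nhds_zero_of_norm_lt_one hq).mul_const w).div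
      (tendsto_one_sub_pow_succ hq) one_ne_zero).norm
  · rw [qPoch3_self_succ, Nat.choose_succ_succ', Nat.choose_one_right, pow_add, pow_succ,
      div_mul_div_comm]
    ring

theorem eq_mul_Eq_general (q α β z : ℂ) (hq1 : ‖q‖ < 1) (hα : α ≠ 0)
    (hz : ‖α * z‖ < 1) :
    (∑' n : ℕ, (α * z) ^ n / qPoch3 q q n)
      * (∑' n : ℕ, q ^ (n.choose 2) * (β * z) ^ n / qPoch3 q q n)
      = ∑' n : ℕ, qPoch3 q (-β * α⁻¹) n / qPoch3 q q n * (α * z) ^ n := by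
  have hβz : β * z = β * α⁻¹ * (α * z) := by field_simp
  rw [tsum_mul_tsum_eq_tsum_sum_antidiagonal_of_summable_norm
    (summable_norm_pow_div_qPoch3 hq1 hz) (summable_norm_pow_choose_two_mul_pow_div_qPoch3 hq1 _)]
  refine tsum_congr fun n => ?_
  rw [neg_mul, qPoch3_neg_div_qPoch3_self_eq_sum_antidiagonal q _
    (qPoch3_ne_zero_of_norm_lt_one hq1 hq1.le n), sum_mul]
  refine sum_congr rfl fun p hp => ?_
  rw [← mem_antidiagonal.mp hp, hβz, mul_pow, pow_add]
  ring

/-- `e_q(αz) E_q(βz) = ∑ (-β/α;q)_n/(q;q)_n (αz)^n`. -/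
theorem eq_mul_Eq (q α β z : ℂ) (hq0 : 0 < ‖q‖) (hq1 : ‖q‖ < 1) (hα : α ≠ 0)
    (hz : ‖α * z‖ < 1) :
    (∑' n : ℕ, (α * z) ^ n / qPoch3 q q n)
      * (∑' n : ℕ, q ^ (n.choose 2) * (β * z) ^ n / qPoch3 q q n)
      = ∑' n : ℕ, qPoch3 q (-β * α⁻¹) n / qPoch3 q q n * (α * z) ^ n :=
  eq_mul_Eq_general q α β z hq1 hα hz
end

section
/- For 0 < |q| < 1 and |z| < 1 with α nonzero, e_q(αz)/e_q(βz) = ∑_{n=0}^∞ ((βα^{-1};q)_n/(q;q)_n) (αz)^n, i.e. the quotient of q-exponentials equals the 1φ0 basic hypergeometric series with parameter β/α at αz. -/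
/-!
Write `φ_a(x) = ∑ (a;q)ₙ/(q;q)ₙ xⁿ` (`qBinomialSeries q a x`), so that `e_q = φ_0`.
Comparing coefficients gives the functional equation `(1 - x) φ_a(x) = (1 - a x) φ_a(q x)`.
Hence both `φ_0(x)` and `φ_0(a x) φ_a(x)` satisfy `G(q x) = (1 - x) G(x)`, and both tend
to `1` along `qᴺ x → 0`. Two such functions agree:
`G(qᴺ x) H(x) = (x;q)_N G(x) H(x) = H(qᴺ x) G(x)`, and letting `N → ∞` gives `H(x) = G(x)`.
The same iteration shows `φ_0(x) ≠ 0`, and with `a = β/α`, `x = α z` the identity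
`φ_0(x) = φ_0(a x) φ_a(x)` is the theorem.
-/

open Filter Topology Finset

noncomputable def qPoch7 (q a : ℂ) (n : ℕ) : ℂ := ∏ j ∈ Finset.range n, (1 - a * q ^ j)

section qShift

variable {q x : ℂ} {G H : ℂ → ℂ}

lemma qShift_pow_mul (hG : ∀ n : ℕ, G (q ^ (n + 1) * x) = (1 - q ^ n * x) * G (q ^ n * x))
    (N : ℕ) : G (q ^ N * x) = (∏ j ∈ range N, (1 - q ^ j * x)) * G x := by
  induction N with
  | zero => simp
  | succ N ih => rw [hG, ih, prod_range_succ]; ring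

lemma eq_of_qShift (hG : ∀ n : ℕ, G (q ^ (n + 1) * x) = (1 - q ^ n * x) * G (q ^ n * x))
    (hH : ∀ n : ℕ, H (q ^ (n + 1) * x) = (1 - q ^ n * x) * H (q ^ n * x))
    (hG₁ : Tendsto (fun N : ℕ => G (q ^ N * x)) atTop (𝓝 1))
    (hH₁ : Tendsto (fun N : ℕ => H (q ^ N * x)) atTop (𝓝 1)) : G x = H x := by
  have hcross : ∀ N : ℕ, G (q ^ N * x) * H x = H (q ^ N * x) * G x := fun N => by
    rw [qShift_pow_mul hG, qShift_pow_mul hH]; ring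
  have hlimH : Tendsto (fun N : ℕ => G (q ^ N * x) * H x) atTop (𝓝 (H x)) := by
    simpa using hG₁.mul_const (H x)
  have hlimG : Tendsto (fun N : ℕ => G (q ^ N * x) * H x) atTop (𝓝 (G x)) := by
    simpa [hcross] using hH₁.mul_const (G x)
  exact tendsto_nhds_unique hlimG hlimH

lemma ne_zero_of_qShift (hG : ∀ n : ℕ, G (q ^ (n + 1) * x) = (1 - q ^ n * x) * G (q ^ n * x))
    (hG₁ : Tendsto (fun N : ℕ => G (q ^ N * x)) atTop (𝓝 1)) : G x ≠ 0 := by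
  intro h
  have hG₀ : Tendsto (fun N : ℕ => G (q ^ N * x)) atTop (𝓝 0) := by
    simp [qShift_pow_mul hG, h]
  exact one_ne_zero (tendsto_nhds_unique hG₁ hG₀)

end qShift

lemma one_sub_ne_zero_of_norm_lt_one {u : ℂ} (hu : ‖u‖ < 1) : 1 - u ≠ 0 :=
  sub_ne_zero.2 fun h => by simp [← h] at hu

lemma norm_pow_mul_lt_one {q x : ℂ} (hq : ‖q‖ < 1) (hx : ‖x‖ < 1) (n : ℕ) :
    ‖q ^ n * x‖ < 1 := by
  rw [norm_mul, norm_pow]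
  exact (mul_le_of_le_one_left (norm_nonneg x) (pow_le_one₀ (norm_nonneg q) hq.le)).trans_lt hx

section qPoch7

variable {q : ℂ} (a : ℂ)

@[simp]
lemma qPoch7_zero : qPoch7 q a 0 = 1 := by simp [qPoch7]

lemma qPoch7_succ (n : ℕ) : qPoch7 q a (n + 1) = qPoch7 q a n * (1 - a * q ^ n) :=
  prod_range_succ _ _

@[simp]
lemma qPoch7_zero_left (n : ℕ) : qPoch7 q 0 n = 1 := by simp [qPoch7]

lemma qPoch7_self_ne_zero (hq : ‖q‖ < 1) (n : ℕ) : qPoch7 q q n ≠ 0 :=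
  prod_ne_zero_iff.2 fun j _ => by
    rw [← pow_succ']
    exact one_sub_ne_zero_of_norm_lt_one
      (by simpa using pow_lt_one₀ (norm_nonneg q) hq j.succ_ne_zero)

lemma qPoch7_div_succ_mul (hq : ‖q‖ < 1) (n : ℕ) :
    qPoch7 q a (n + 1) / qPoch7 q q (n + 1) * (1 - q ^ (n + 1))
      = qPoch7 q a n / qPoch7 q q n * (1 - a * q ^ n) := by
  have hn := qPoch7_self_ne_zero hq n
  have hn' := one_sub_ne_zero_of_norm_lt_one (norm_pow_mul_lt_one hq hq n)
  rw [qPoch7_succ, qPoch7_succ, pow_succ]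
  field_simp

end qPoch7

noncomputable def qBinomialSeries (q a x : ℂ) : ℂ :=
  ∑' n : ℕ, qPoch7 q a n / qPoch7 q q n * x ^ n

section qBinomialSeries

variable {q x : ℂ} (a : ℂ)

lemma summable_qBinomialSeries (hq : ‖q‖ < 1) (hx : ‖x‖ < 1) :
    Summable fun n : ℕ => qPoch7 q a n / qPoch7 q q n * x ^ n := by
  refine summable_of_ratio_norm_eventually_le (r := (1 + ‖x‖) / 2) (by linarith) ?_
  have hqn := tendsto_pow_atTop_nhds_zero_of_norm_lt_one hq
  have hratio : Tendsto (fun n : ℕ => ‖(1 - a * q ^ n) * x / (1 - q * q ^ n)‖) atTop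
      (𝓝 ‖(1 - a * 0) * x / (1 - q * 0)‖) :=
    (((tendsto_const_nhds.sub (tendsto_const_nhds.mul hqn)).mul tendsto_const_nhds).div
      (tendsto_const_nhds.sub (tendsto_const_nhds.mul hqn)) (by simp)).norm
  simp only [mul_zero, sub_zero, one_mul, div_one] at hratio
  filter_upwards [hratio.eventually_le_const (by linarith : ‖x‖ < (1 + ‖x‖) / 2)] with n hn
  have hstep : qPoch7 q a (n + 1) / qPoch7 q q (n + 1) * x ^ (n + 1)
      = (1 - a * q ^ n) * x / (1 - q * q ^ n) * (qPoch7 q a n / qPoch7 q q n * x ^ n) := by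
    rw [qPoch7_succ, qPoch7_succ, pow_succ, mul_div_mul_comm]; ring
  rw [hstep, norm_mul]
  exact mul_le_mul_of_nonneg_right hn (norm_nonneg _)

lemma one_sub_mul_qBinomialSeries (hq : ‖q‖ < 1) (hx : ‖x‖ < 1) :
    (1 - x) * qBinomialSeries q a x = (1 - a * x) * qBinomialSeries q a (q * x) := by
  have hs := summable_qBinomialSeries a hq hx
  have hqx : ‖q * x‖ < 1 := by simpa using norm_pow_mul_lt_one hq hx 1
  have hs' := summable_qBinomialSeries a hq hqx
  have key : qBinomialSeries q a x - qBinomialSeries q a (q * x)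
      = x * qBinomialSeries q a x - a * x * qBinomialSeries q a (q * x) :=
    calc qBinomialSeries q a x - qBinomialSeries q a (q * x)
        = ∑' n : ℕ, qPoch7 q a n / qPoch7 q q n * (1 - q ^ n) * x ^ n := by
          rw [qBinomialSeries, qBinomialSeries, ← hs.tsum_sub hs']
          exact tsum_congr fun n => by ring
      _ = ∑' n : ℕ,
            qPoch7 q a (n + 1) / qPoch7 q q (n + 1) * (1 - q ^ (n + 1)) * x ^ (n + 1) := by
          rw [((hs.sub hs').congr fun n => by ring).tsum_eq_zero_add]
          simp only [pow_zero, sub_self, mul_zero, zero_mul, zero_add]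
      _ = ∑' n : ℕ, (x * (qPoch7 q a n / qPoch7 q q n * x ^ n)
            - a * x * (qPoch7 q a n / qPoch7 q q n * (q * x) ^ n)) :=
          tsum_congr fun n => by rw [qPoch7_div_succ_mul a hq]; ring
      _ = x * qBinomialSeries q a x - a * x * qBinomialSeries q a (q * x) := by
          rw [(hs.mul_left x).tsum_sub (hs'.mul_left _), tsum_mul_left, tsum_mul_left]; rfl
  linear_combination key

lemma tendsto_qBinomialSeries_pow_mul (hq : ‖q‖ < 1) (hx : ‖x‖ < 1) :
    Tendsto (fun N : ℕ => qBinomialSeries q a (q ^ N * x)) atTop (𝓝 1) := by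
  have hdom := tendsto_tsum_of_dominated_convergence
    (f := fun N n => qPoch7 q a n / qPoch7 q q n * (q ^ N * x) ^ n)
    (g := fun n => qPoch7 q a n / qPoch7 q q n * 0 ^ n)
    (summable_norm_iff.2 (summable_qBinomialSeries a hq hx))
    (fun n => by
      simpa using (((tendsto_pow_atTop_nhds_zero_of_norm_lt_one hq).mul_const x).pow n).const_mul
        (qPoch7 q a n / qPoch7 q q n))
    (Eventually.of_forall fun N n => by
      rw [mul_pow, norm_mul, norm_mul (_ / _)]
      gcongr
      rw [norm_mul, ← pow_mul, norm_pow]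
      exact mul_le_of_le_one_left (norm_nonneg _) (pow_le_one₀ (norm_nonneg q) hq.le))
  have hg : ∑' n : ℕ, qPoch7 q a n / qPoch7 q q n * 0 ^ n = 1 := by
    rw [tsum_eq_single 0 fun n hn => by simp [zero_pow hn]]
    simp
  rwa [hg] at hdom

lemma qBinomialSeries_zero_q_mul (hq : ‖q‖ < 1) (hx : ‖x‖ < 1) :
    qBinomialSeries q 0 (q * x) = (1 - x) * qBinomialSeries q 0 x := by
  simpa using (one_sub_mul_qBinomialSeries 0 hq hx).symm

lemma qBinomialSeries_zero_pow_succ_mul (hq : ‖q‖ < 1) (hx : ‖x‖ < 1) (n : ℕ) :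
    qBinomialSeries q 0 (q ^ (n + 1) * x)
      = (1 - q ^ n * x) * qBinomialSeries q 0 (q ^ n * x) := by
  rw [pow_succ', mul_assoc, qBinomialSeries_zero_q_mul hq (norm_pow_mul_lt_one hq hx n)]

lemma qBinomialSeries_zero_ne_zero (hq : ‖q‖ < 1) (hx : ‖x‖ < 1) :
    qBinomialSeries q 0 x ≠ 0 :=
  ne_zero_of_qShift (G := qBinomialSeries q 0) (qBinomialSeries_zero_pow_succ_mul hq hx)
    (tendsto_qBinomialSeries_pow_mul 0 hq hx)

/-- The `q`-binomial theorem `φ_a(x) = (ax;q)_∞/(x;q)_∞`, where `φ_0(y) = 1/(y;q)_∞`. -/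
theorem qBinomialSeries_zero_mul (hq : ‖q‖ < 1) (hx : ‖x‖ < 1) (hax : ‖a * x‖ < 1) :
    qBinomialSeries q 0 (a * x) * qBinomialSeries q a x = qBinomialSeries q 0 x := by
  refine (eq_of_qShift (G := qBinomialSeries q 0)
    (H := fun y => qBinomialSeries q 0 (a * y) * qBinomialSeries q a y)
    (qBinomialSeries_zero_pow_succ_mul hq hx) (fun n => ?_)
    (tendsto_qBinomialSeries_pow_mul 0 hq hx) ?_).symm
  · have hy := norm_pow_mul_lt_one hq hx n
    have hay : ‖a * (q ^ n * x)‖ < 1 := by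
      simpa [mul_left_comm] using norm_pow_mul_lt_one hq hax n
    have hshift := one_sub_mul_qBinomialSeries a hq hy
    rw [pow_succ', mul_assoc, mul_left_comm, qBinomialSeries_zero_q_mul hq hay]
    linear_combination qBinomialSeries q 0 (a * (q ^ n * x)) * hshift.symm
  · simpa [mul_left_comm] using
      (tendsto_qBinomialSeries_pow_mul 0 hq hax).mul (tendsto_qBinomialSeries_pow_mul a hq hx)

end qBinomialSeries

lemma tsum_pow_div_qPoch7 (q w : ℂ) :
    ∑' n : ℕ, w ^ n / qPoch7 q q n = qBinomialSeries q 0 w :=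
  tsum_congr fun n => by simp [div_eq_inv_mul]

theorem eq_div_eq_general (q α β z : ℂ) (hq1 : ‖q‖ < 1) (hα : α ≠ 0)
    (hαz : ‖α * z‖ < 1) (hβz : ‖β * z‖ < 1) :
    (∑' n : ℕ, (α * z) ^ n / qPoch7 q q n) / (∑' n : ℕ, (β * z) ^ n / qPoch7 q q n)
      = ∑' n : ℕ, qPoch7 q (β * α⁻¹) n / qPoch7 q q n * (α * z) ^ n := by
  have hβ : β * α⁻¹ * (α * z) = β * z := by field_simp
  rw [tsum_pow_div_qPoch7, tsum_pow_div_qPoch7, div_eq_iff (qBinomialSeries_zero_ne_zero hq1 hβz),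
    ← hβ]
  exact (qBinomialSeries_zero_mul _ hq1 hαz (hβ ▸ hβz)).symm.trans (mul_comm _ _)

/-- `e_q(αz)/e_q(βz) = 1φ0(β/α; —; q, αz)`. -/
theorem eq_div_eq (q α β z : ℂ) (hq0 : 0 < ‖q‖) (hq1 : ‖q‖ < 1) (hα : α ≠ 0)
    (hαz : ‖α * z‖ < 1) (hβz : ‖β * z‖ < 1) :
    (∑' n : ℕ, (α * z) ^ n / qPoch7 q q n) / (∑' n : ℕ, (β * z) ^ n / qPoch7 q q n)
      = ∑' n : ℕ, qPoch7 q (β * α⁻¹) n / qPoch7 q q n * (α * z) ^ n :=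
  eq_div_eq_general q α β z hq1 hα hαz hβz
end
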